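/- arXiv:2302.12870 — 4 statements merged into one kernel-verified Lean document; each statement's English description precedes it below -/
import Mathlib

section
/- Let k ≤ k' be a field extension and C a k-coalgebra. For a k-linear subspace V ≤ C, let C_V denote the largest subcoalgebra of C contained in V. Then the canonical inclusion k' ⊗_k C_V ⊆ (k' ⊗_k C)_{k' ⊗_k V} is an equality: scalar extension along field extensions preserves the largest subcoalgebra contained in a given subspace. -/
/-!
Base change of a subcoalgebra is a subcoalgebra, which gives `k' ⊗ C_V ≤ (k' ⊗ C)_{k' ⊗ V}`.
Conversely, fix a `k`-basis `(bᵢ)` of `k'`, write elements of `k' ⊗ C` as `∑ bᵢ ⊗ cᵢ`, and let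
`D` be the `k`-span of the coordinates `cᵢ` of all elements of `E = (k' ⊗ C)_{k' ⊗ V}`. Then
`E ≤ k' ⊗ D`; an element lies in `k' ⊗ W` iff all its coordinates lie in `W`, so `D ≤ V`; and
since `Δ` commutes with taking coordinates, `Δ D ≤ D ⊗ D`. Hence `D ≤ C_V` and `E ≤ k' ⊗ C_V`.
-/

open TensorProduct

/-- A submodule `D ≤ C` is a subcoalgebra with respect to a comultiplication `δ` if
`δ(D)` is contained in the image of `D ⊗ D → C ⊗ C`. -/
def IsSubcoalg {k C : Type*} [CommRing k] [AddCommGroup C] [Module k C]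
    (δ : C →ₗ[k] C ⊗[k] C) (D : Submodule k C) : Prop :=
  ∀ d ∈ D, δ d ∈ LinearMap.range (TensorProduct.map D.subtype D.subtype)

/-- The largest subcoalgebra (with respect to a comultiplication `δ`) contained in a
subspace `V ≤ C`: the sup of all subcoalgebras contained in `V`. -/
noncomputable def coalgCore {k C : Type*} [CommRing k] [AddCommGroup C] [Module k C]
    (δ : C →ₗ[k] C ⊗[k] C) (V : Submodule k C) : Submodule k C :=
  sSup {D : Submodule k C | IsSubcoalg δ D ∧ D ≤ V}

/-- The comultiplication on the base change `k' ⊗[k] C` of a `k`-coalgebra `C` along a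
field extension `k ≤ k'`. -/
noncomputable def bcComul (k k' C : Type*) [Field k] [Field k'] [Algebra k k']
    [AddCommGroup C] [Module k C] [Coalgebra k C] :
    (k' ⊗[k] C) →ₗ[k'] (k' ⊗[k] C) ⊗[k'] (k' ⊗[k] C) :=
  (TensorProduct.AlgebraTensorModule.distribBaseChange k k' C C).toLinearMap ∘ₗ
    (Coalgebra.comul (R := k) (A := C)).baseChange k'

open Submodule

section BaseChange

variable {R A M N ι : Type*} [CommSemiring R] [CommSemiring A] [Algebra R A]
  [AddCommMonoid M] [Module R M] [AddCommMonoid N] [Module R N]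

theorem range_mapIncl_mono {p q : Submodule R M} (h : p ≤ q) :
    LinearMap.range (mapIncl p p) ≤ LinearMap.range (mapIncl q q) := by
  rw [range_mapIncl, range_mapIncl]
  exact map₂_le_map₂ h h

theorem Submodule.map_distribBaseChange_baseChange_range_mapIncl (p : Submodule R M) :
    ((LinearMap.range (mapIncl p p)).baseChange A).map
        (AlgebraTensorModule.distribBaseChange R A M M).toLinearMap =
      LinearMap.range (mapIncl (p.baseChange A) (p.baseChange A)) := by
  rw [range_mapIncl, range_mapIncl, map₂_eq_span_image2, baseChange_span, map_span,
    baseChange_eq_span, map_coe, map₂_span_span, Set.image_image]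
  congr 1
  ext x
  simp [Set.mem_image2]

noncomputable def Module.Basis.tensorCoord (b : Module.Basis ι R A) (M : Type*) [AddCommMonoid M]
    [Module R M] (i : ι) : A ⊗[R] M →ₗ[R] M :=
  TensorProduct.lid R M ∘ₗ (b.coord i).rTensor M

noncomputable def Module.Basis.coordSpan (b : Module.Basis ι R A) (E : Submodule A (A ⊗[R] M)) :
    Submodule R M :=
  ⨆ i, (E.restrictScalars R).map (b.tensorCoord M i)

namespace Module.Basis

variable (b : Module.Basis ι R A)

@[simp]
theorem tensorCoord_tmul (i : ι) (a : A) (m : M) :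
    b.tensorCoord M i (a ⊗ₜ m) = b.repr a i • m := by
  simp [tensorCoord]

theorem tensorCoord_baseChange (f : M →ₗ[R] N) (i : ι) (x : A ⊗[R] M) :
    b.tensorCoord N i (f.baseChange A x) = f (b.tensorCoord M i x) := by
  induction x using TensorProduct.induction_on with
  | zero => simp
  | tmul a m => simp
  | add x y hx hy => simp only [map_add, hx, hy]

theorem _root_.Submodule.mem_baseChange_iff_forall_tensorCoord_mem {p : Submodule R M}
    {x : A ⊗[R] M} : x ∈ p.baseChange A ↔ ∀ i, b.tensorCoord M i x ∈ p := by
  classical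
  refine ⟨?_, fun h => ?_⟩
  · rintro ⟨y, rfl⟩ i
    rw [tensorCoord_baseChange]
    exact (b.tensorCoord p i y).2
  · rw [← (equivFinsuppOfBasisLeft b).symm_apply_apply x, equivFinsuppOfBasisLeft_symm_apply]
    refine sum_mem fun i _ => tmul_mem_baseChange_of_mem _ ?_
    rw [equivFinsuppOfBasisLeft_apply]
    exact h i

theorem coordSpan_le_iff {E : Submodule A (A ⊗[R] M)} {p : Submodule R M} :
    b.coordSpan E ≤ p ↔ E ≤ p.baseChange A := by
  simp only [coordSpan, iSup_le_iff, map_le_iff_le_comap]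
  simp only [SetLike.le_def, mem_comap, restrictScalars_mem,
    mem_baseChange_iff_forall_tensorCoord_mem b]
  exact ⟨fun h _ hx i => h i hx, fun h i _ hx => h hx i⟩

end Module.Basis

end BaseChange

section CoalgCore

variable {k C : Type*} [CommRing k] [AddCommGroup C] [Module k C]

theorem isSubcoalg_iff_le_comap {δ : C →ₗ[k] C ⊗[k] C} {D : Submodule k C} :
    IsSubcoalg δ D ↔ D ≤ (LinearMap.range (mapIncl D D)).comap δ :=
  Iff.rfl

theorem coalgCore_le (δ : C →ₗ[k] C ⊗[k] C) (V : Submodule k C) : coalgCore δ V ≤ V :=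
  sSup_le fun _ h => h.2

theorem le_coalgCore {δ : C →ₗ[k] C ⊗[k] C} {D V : Submodule k C} (hD : IsSubcoalg δ D)
    (hDV : D ≤ V) : D ≤ coalgCore δ V :=
  le_sSup ⟨hD, hDV⟩

theorem isSubcoalg_coalgCore (δ : C →ₗ[k] C ⊗[k] C) (V : Submodule k C) :
    IsSubcoalg δ (coalgCore δ V) :=
  isSubcoalg_iff_le_comap.2 <|
    sSup_le fun _ hD d hd => range_mapIncl_mono (le_coalgCore hD.1 hD.2) (hD.1 d hd)

end CoalgCore

section BaseChangeCoalgebra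

variable {k k' C ι : Type*} [Field k] [Field k'] [Algebra k k']
  [AddCommGroup C] [Module k C] [Coalgebra k C]

theorem bcComul_apply (x : k' ⊗[k] C) :
    bcComul k k' C x = AlgebraTensorModule.distribBaseChange k k' C C
      ((Coalgebra.comul (R := k) (A := C)).baseChange k' x) :=
  rfl

theorem IsSubcoalg.baseChange {D : Submodule k C}
    (hD : IsSubcoalg (Coalgebra.comul (R := k) (A := C)) D) :
    IsSubcoalg (bcComul k k' C) (D.baseChange k') := by
  refine isSubcoalg_iff_le_comap.2 ((baseChange_eq_span k' D).trans_le (span_le.2 ?_))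
  rintro _ ⟨d, hd, rfl⟩
  rw [SetLike.mem_coe, mem_comap, ← map_distribBaseChange_baseChange_range_mapIncl]
  exact ⟨1 ⊗ₜ Coalgebra.comul d, tmul_mem_baseChange_of_mem 1 (hD d hd), rfl⟩

theorem isSubcoalg_coordSpan (b : Module.Basis ι k k') {E : Submodule k' (k' ⊗[k] C)}
    (hE : IsSubcoalg (bcComul k k' C) E) :
    IsSubcoalg (Coalgebra.comul (R := k) (A := C)) (b.coordSpan E) := by
  set D := b.coordSpan E
  have hcomul (e : k' ⊗[k] C) (he : e ∈ E) :
      (Coalgebra.comul (R := k) (A := C)).baseChange k' e ∈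
        (LinearMap.range (mapIncl D D)).baseChange k' := by
    have := range_mapIncl_mono (b.coordSpan_le_iff.1 le_rfl) (hE e he)
    rwa [← map_distribBaseChange_baseChange_range_mapIncl, mem_map_equiv, bcComul_apply,
      LinearEquiv.symm_apply_apply] at this
  refine isSubcoalg_iff_le_comap.2 (iSup_le fun i => map_le_iff_le_comap.2 fun e he => ?_)
  rw [mem_comap, mem_comap, ← b.tensorCoord_baseChange]
  exact (mem_baseChange_iff_forall_tensorCoord_mem b).1 (hcomul e he) i

end BaseChangeCoalgebra

/-- Scalar extension along a field extension preserves the largest subcoalgebra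
contained in a given subspace: `k' ⊗[k] C_V = (k' ⊗[k] C)_{k' ⊗[k] V}`. -/
theorem stmt_8 {k k' C : Type*} [Field k] [Field k'] [Algebra k k']
    [AddCommGroup C] [Module k C] [Coalgebra k C] (V : Submodule k C) :
    (coalgCore (Coalgebra.comul (R := k) (A := C)) V).baseChange k' =
      coalgCore (bcComul k k' C) (V.baseChange k') := by
  apply le_antisymm
  · exact le_coalgCore (isSubcoalg_coalgCore _ V).baseChange
      (baseChange_mono k' (coalgCore_le _ V))
  · let b := Module.Basis.ofVectorSpace k k'
    set E := coalgCore (bcComul k k' C) (V.baseChange k')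
    have hEV : b.coordSpan E ≤ V := b.coordSpan_le_iff.2 (coalgCore_le _ _)
    have hcore : b.coordSpan E ≤ coalgCore Coalgebra.comul V :=
      le_coalgCore (isSubcoalg_coordSpan b (isSubcoalg_coalgCore _ _)) hEV
    exact b.coordSpan_le_iff.1 hcore
end

section
/- Let k ≤ k' be a field extension, V a k-vector space, and V_i ≤ V, i ∈ I, an arbitrary family of k-subspaces. Then inside k' ⊗_k V one has k' ⊗_k (⋂_i V_i) = ⋂_i (k' ⊗_k V_i). -/
/-!
An `R`-basis `b` of `A` identifies `A ⊗[R] M` with `ι →₀ M` via `∑ᵢ bᵢ ⊗ mᵢ ↦ (mᵢ)ᵢ`, and under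
this identification `p.baseChange A` is exactly the set of families with all `mᵢ ∈ p`. Being in
every `Wⱼ` coordinatewise is the same as having every coordinate in `⋂ⱼ Wⱼ`.
-/

open TensorProduct

namespace Submodule

variable {R A M ι : Type*} [CommSemiring R] [Semiring A] [Algebra R A]
  [AddCommMonoid M] [Module R M]

theorem mem_baseChange_iff_forall_equivFinsuppOfBasisLeft_mem [DecidableEq ι]
    (b : Module.Basis ι R A) (p : Submodule R M) (x : A ⊗[R] M) :
    x ∈ p.baseChange A ↔ ∀ i, equivFinsuppOfBasisLeft b x i ∈ p := by
  constructor
  · rintro ⟨y, rfl⟩ i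
    induction y with
    | zero => simp
    | tmul a m =>
      simpa [equivFinsuppOfBasisLeft_apply_tmul_apply] using p.smul_mem _ m.2
    | add y z hy hz => simpa using p.add_mem hy hz
  · intro hx
    rw [← (equivFinsuppOfBasisLeft b).symm_apply_apply x,
      equivFinsuppOfBasisLeft_symm_apply]
    exact sum_mem fun i _ => tmul_mem_baseChange_of_mem _ (hx i)

theorem baseChange_iInf [Module.Free R A] {I : Type*} (W : I → Submodule R M) :
    (⨅ i, W i).baseChange A = ⨅ i, (W i).baseChange A := by
  classical
  ext x
  simp only [mem_iInf,
    mem_baseChange_iff_forall_equivFinsuppOfBasisLeft_mem (Module.Free.chooseBasis R A)]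
  exact forall_comm

end Submodule

/-- Scalar extension along a field extension `k ≤ k'` preserves arbitrary
intersections of subspaces: `k' ⊗ₖ (⋂ᵢ Vᵢ) = ⋂ᵢ (k' ⊗ₖ Vᵢ)` inside `k' ⊗ₖ V`. -/
theorem stmt_9 {k k' : Type*} [Field k] [Field k'] [Algebra k k']
    {V : Type*} [AddCommGroup V] [Module k V] {I : Type*} (W : I → Submodule k V) :
    (⨅ i, W i).baseChange k' = ⨅ i, (W i).baseChange k' :=
  Submodule.baseChange_iInf W
end

section
/- Let π : H → H' be a morphism of Hopf algebras over a field k. If the only elements h ∈ H satisfying (id ⊗ π)Δ(h) = h ⊗ 1 are the scalar multiples of 1, then for every right H-comodule V, every H'-coinvariant element of V (under the corestricted coaction) is an H-coinvariant. -/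
/-!
For a functional `f` on `V`, the slice `(f ⊗ id)(ρ v) ∈ H` inherits the `H'`-coinvariance of `v`
through coassociativity, so it is a scalar `c • 1`, and the counit axiom forces `c = f v`. Thus
`ρ v` and `v ⊗ 1` have the same slices, and over a field the functionals on `V` separate `V ⊗ H`.
-/

open TensorProduct

namespace TensorProduct

variable {R M N : Type*} [CommRing R] [AddCommGroup M] [Module R M] [AddCommGroup N] [Module R N]

def slice (f : Module.Dual R M) : M ⊗[R] N →ₗ[R] N :=
  TensorProduct.lid R N ∘ₗ f.rTensor N

@[simp]
theorem slice_tmul (f : Module.Dual R M) (m : M) (n : N) : slice f (m ⊗ₜ[R] n) = f m • n := by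
  simp [slice]

theorem slice_lTensor {P : Type*} [AddCommGroup P] [Module R P] (f : Module.Dual R M)
    (g : N →ₗ[R] P) (x : M ⊗[R] N) : slice f (g.lTensor M x) = g (slice f x) := by
  induction x using TensorProduct.induction_on with
  | zero => simp
  | tmul m n => simp
  | add x y hx hy => simp [hx, hy]

theorem slice_assoc_tmul {P : Type*} [AddCommGroup P] [Module R P] (f : Module.Dual R M)
    (x : M ⊗[R] N) (p : P) :
    slice f (TensorProduct.assoc R M N P (x ⊗ₜ[R] p)) = slice f x ⊗ₜ[R] p := by
  induction x using TensorProduct.induction_on with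
  | zero => simp
  | tmul m n => simp [smul_tmul']
  | add x y hx hy => simp only [add_tmul, map_add, hx, hy]

theorem ext_slice [Module.Free R M] {x y : M ⊗[R] N}
    (h : ∀ f : Module.Dual R M, slice f x = slice f y) : x = y := by
  let b := Module.Free.chooseBasis R M
  apply ((b.repr.rTensor N).trans (finsuppScalarLeft R N _)).injective
  ext i
  have hcoord (z : M ⊗[R] N) :
      (Finsupp.lapply i).rTensor N (b.repr.rTensor N z) = (b.coord i).rTensor N z :=
    (LinearMap.rTensor_comp_apply N _ _ z).symm
  simp only [LinearEquiv.trans_apply, finsuppScalarLeft_apply, hcoord]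
  exact h (b.coord i)

end TensorProduct

section Comodule

variable {R V C : Type*} [CommRing R] [AddCommGroup V] [Module R V] [AddCommGroup C] [Module R C]
  [Coalgebra R C] {ρ : V →ₗ[R] V ⊗[R] C}

theorem lTensor_comul_slice_coaction
    (hcoassoc : (TensorProduct.assoc R V C C).toLinearMap ∘ₗ ρ.rTensor C ∘ₗ ρ =
      (Coalgebra.comul (R := R) (A := C)).lTensor V ∘ₗ ρ)
    {D : Type*} [AddCommGroup D] [Module R D] (g : C →ₗ[R] D) {v : V} {u : D}
    (hv : g.lTensor V (ρ v) = v ⊗ₜ[R] u) (f : Module.Dual R V) :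
    g.lTensor C (Coalgebra.comul (slice f (ρ v))) = slice f (ρ v) ⊗ₜ[R] u := by
  have hcomul : (Coalgebra.comul (R := R) (A := C)).lTensor V (ρ v) =
      TensorProduct.assoc R V C C (ρ.rTensor C (ρ v)) :=
    (LinearMap.congr_fun hcoassoc v).symm
  have hassoc (t : (V ⊗[R] C) ⊗[R] C) : (g.lTensor C).lTensor V (TensorProduct.assoc R V C C t) =
      TensorProduct.assoc R V C D (g.lTensor (V ⊗[R] C) t) := by
    have h : (g.lTensor C).lTensor V ∘ₗ (TensorProduct.assoc R V C C).toLinearMap =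
        (TensorProduct.assoc R V C D).toLinearMap ∘ₗ g.lTensor (V ⊗[R] C) :=
      TensorProduct.ext_threefold fun _ _ _ => rfl
    exact LinearMap.congr_fun h t
  have hcomm : g.lTensor (V ⊗[R] C) (ρ.rTensor C (ρ v)) = ρ.rTensor D (g.lTensor V (ρ v)) :=
    LinearMap.congr_fun ((LinearMap.lTensor_comp_rTensor (f := ρ) (g := g)).trans
      (LinearMap.rTensor_comp_lTensor (f := ρ) (g := g)).symm) (ρ v)
  calc g.lTensor C (Coalgebra.comul (slice f (ρ v)))
      = slice f ((g.lTensor C).lTensor V (TensorProduct.assoc R V C C (ρ.rTensor C (ρ v)))) := by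
        rw [← hcomul, slice_lTensor, slice_lTensor]
    _ = slice f (ρ v) ⊗ₜ[R] u := by
        rw [hassoc, hcomm, hv, LinearMap.rTensor_tmul, slice_assoc_tmul]

theorem counit_slice_coaction
    (hcounit : (TensorProduct.rid R V).toLinearMap ∘ₗ
      (Coalgebra.counit (R := R) (A := C)).lTensor V ∘ₗ ρ = LinearMap.id)
    (f : Module.Dual R V) (v : V) :
    Coalgebra.counit (slice f (ρ v)) = f v := by
  have hv : (Coalgebra.counit (R := R) (A := C)).lTensor V (ρ v) = v ⊗ₜ[R] 1 := by
    rw [← TensorProduct.rid_symm_apply, LinearEquiv.eq_symm_apply]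
    exact LinearMap.congr_fun hcounit v
  rw [← slice_lTensor, hv, slice_tmul, smul_eq_mul, mul_one]

end Comodule

theorem stmt_12_general {k H H' : Type*} [Field k] [Ring H] [Ring H']
    [HopfAlgebra k H] [HopfAlgebra k H']
    (πL : H →ₗ[k] H')
    (hH : ∀ h : H, (LinearMap.lTensor H πL) (Coalgebra.comul h) = h ⊗ₜ[k] (1 : H') →
      ∃ c : k, h = c • (1 : H)) :
    ∀ (V : Type*) [AddCommGroup V] [Module k V] (ρ : V →ₗ[k] V ⊗[k] H),
      ((TensorProduct.assoc k V H H).toLinearMap ∘ₗ (ρ.rTensor H) ∘ₗ ρ =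
        (LinearMap.lTensor V (Coalgebra.comul (R := k) (A := H))) ∘ₗ ρ) →
      ((TensorProduct.rid k V).toLinearMap ∘ₗ
        (LinearMap.lTensor V (Coalgebra.counit (R := k) (A := H))) ∘ₗ ρ = LinearMap.id) →
      ∀ v : V, (LinearMap.lTensor V πL) (ρ v) = v ⊗ₜ[k] (1 : H') →
        ρ v = v ⊗ₜ[k] (1 : H) := by
  intro V _ _ ρ hcoassoc hcounit v hv
  refine ext_slice fun f => ?_
  obtain ⟨c, hc⟩ := hH _ (lTensor_comul_slice_coaction hcoassoc πL hv f)
  have hcf : c = f v := by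
    simpa [hc, Bialgebra.counit_one] using counit_slice_coaction hcounit f v
  rw [hc, hcf, slice_tmul]

/-- If the only `H'`-coinvariants of a Hopf algebra morphism `π : H → H'` inside `H`
(comodule over itself via `Δ`) are the scalar multiples of `1`, then for every right
`H`-comodule `V` (given by a coassociative counital coaction `ρ`), every
`H'`-coinvariant of `V` is an `H`-coinvariant. -/
theorem stmt_12 {k H H' : Type*} [Field k] [Ring H] [Ring H']
    [HopfAlgebra k H] [HopfAlgebra k H'] (π : H →ₐc[k] H')
    (πL : H →ₗ[k] H') (hπL : ∀ h, πL h = π h)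
    (hH : ∀ h : H, (LinearMap.lTensor H πL) (Coalgebra.comul h) = h ⊗ₜ[k] (1 : H') →
      ∃ c : k, h = c • (1 : H)) :
    ∀ (V : Type*) [AddCommGroup V] [Module k V] (ρ : V →ₗ[k] V ⊗[k] H),
      ((TensorProduct.assoc k V H H).toLinearMap ∘ₗ (ρ.rTensor H) ∘ₗ ρ =
        (LinearMap.lTensor V (Coalgebra.comul (R := k) (A := H))) ∘ₗ ρ) →
      ((TensorProduct.rid k V).toLinearMap ∘ₗ
        (LinearMap.lTensor V (Coalgebra.counit (R := k) (A := H))) ∘ₗ ρ = LinearMap.id) →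
      ∀ v : V, (LinearMap.lTensor V πL) (ρ v) = v ⊗ₜ[k] (1 : H') →
        ρ v = v ⊗ₜ[k] (1 : H) :=
  stmt_12_general πL hH
end

section
/- Let k ≤ k' be an infinite-degree field extension and (V_i)_{i ∈ I} an infinite family of nonzero k-vector spaces. Then the canonical k'-linear map k' ⊗_k (∏_i V_i) → ∏_i (k' ⊗_k V_i) is injective but not surjective. -/
/-!
Fix a basis `(b_j)_{j ∈ J}` of `k'` over `k`. Writing elements of `k' ⊗ M` as `∑ b_j ⊗ m_j`
identifies `k' ⊗ M` with `J →₀ M`, naturally in `M`, and the canonical map becomes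
`(J →₀ ∏ V_i) → ∏ (J →₀ V_i)`, which is visibly injective. Since `J` and `I` are infinite there
is `f : I → J` with infinite range; for nonzero `v_i ∈ V_i`, any preimage of `(b_{f i} ⊗ v_i)_i`
would need a nonzero coefficient at every `f i`, contradicting finiteness of its support.
-/

open TensorProduct

theorem Set.exists_infinite_range (α β : Type*) [Infinite α] [Infinite β] :
    ∃ f : α → β, (Set.range f).Infinite := by
  obtain ⟨⟨e⟩⟩ | ⟨⟨e⟩⟩ := Function.Embedding.total α β
  · exact ⟨e, Set.infinite_range_of_injective e.injective⟩
  · refine ⟨Function.invFun e, ?_⟩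
    rw [(Function.invFun_surjective e.injective).range_eq]
    exact Set.infinite_univ

namespace TensorProduct

variable {R S N I : Type*} [CommSemiring R] [CommSemiring S] [Algebra R S]
  [AddCommMonoid N] [Module R N] [Module S N] [IsScalarTower R S N]
  {M : I → Type*} [∀ i, AddCommMonoid (M i)] [∀ i, Module R (M i)]

lemma equivFinsuppOfBasisLeft_piRightHom_apply {ι : Type*} [DecidableEq ι]
    (ℬ : Module.Basis ι R N) (x : N ⊗[R] (∀ i, M i)) (i : I) (j : ι) :
    equivFinsuppOfBasisLeft ℬ (piRightHom R S N M x i) j = equivFinsuppOfBasisLeft ℬ x j i := by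
  induction x with
  | zero => simp
  | tmul n m => simp
  | add x y hx hy => simp [hx, hy]

lemma piRightHom_injective [Module.Free R N] : Function.Injective (piRightHom R S N M) := by
  classical
  let ℬ := Module.Free.chooseBasis R N
  intro x y hxy
  apply (equivFinsuppOfBasisLeft ℬ).injective
  ext j i
  rw [← equivFinsuppOfBasisLeft_piRightHom_apply (S := S), hxy,
    equivFinsuppOfBasisLeft_piRightHom_apply]

lemma piRightHom_not_surjective [Module.Free R N] (hN : ¬ Module.Finite R N) [Infinite I]
    [∀ i, Nontrivial (M i)] : ¬ Function.Surjective (piRightHom R S N M) := by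
  classical
  let ℬ := Module.Free.chooseBasis R N
  have : Infinite (Module.Free.ChooseBasisIndex R N) :=
    not_finite_iff_infinite.mp fun _ ↦ hN (.of_basis ℬ)
  obtain ⟨f, hf⟩ := Set.exists_infinite_range I (Module.Free.ChooseBasisIndex R N)
  choose v hv using fun i ↦ exists_ne (0 : M i)
  intro hsurj
  obtain ⟨x, hx⟩ := hsurj fun i ↦ ℬ (f i) ⊗ₜ v i
  have hsupp : Set.range f ⊆ (equivFinsuppOfBasisLeft ℬ x).support := by
    rintro _ ⟨i, rfl⟩
    have hcoeff := equivFinsuppOfBasisLeft_piRightHom_apply (S := S) ℬ x i (f i)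
    simp only [hx, equivFinsuppOfBasisLeft_apply_tmul_apply, Module.Basis.repr_self,
      Finsupp.single_eq_same, one_smul] at hcoeff
    exact Finsupp.mem_support_iff.mpr fun h0 ↦ hv i (by rw [hcoeff, h0, Pi.zero_apply])
  exact hf ((equivFinsuppOfBasisLeft ℬ x).support.finite_toSet.subset hsupp)

end TensorProduct

theorem stmt_18 {k k' : Type*} [Field k] [Field k'] [Algebra k k']
    (hinf : ¬ Module.Finite k k') {I : Type*} [Infinite I]
    (V : I → Type*) [∀ i, AddCommGroup (V i)] [∀ i, Module k (V i)]
    [∀ i, Nontrivial (V i)] :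
    Function.Injective (TensorProduct.piRightHom k k' k' V) ∧
      ¬ Function.Surjective (TensorProduct.piRightHom k k' k' V) :=
  ⟨piRightHom_injective, piRightHom_not_surjective hinf⟩
end
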